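/- Let 𝒢 be bipartite with partite classes P₁, P₂, X an n.n.constraint space and X_a a fold of X where a is folded into b. Let 𝒱₁, 𝒱₂ and x^v (v ∈ 𝒱₁ ∪ 𝒱₂) be as in the construction of special configurations. Let M be a Markov cocycle on X such that M|_{Δ_{X_a}} is a Gibbs cocycle with some nearest neighbour interaction V, and let V′ be a nearest neighbour interaction on X for which the following pairs are all V′-good: (1) every pair in Δ_{X_a}; (2) (θ^v_b(x^v), x^v) for every v ∈ 𝒱₁ ∪ 𝒱₂; (3) (θ^w_c(x^v), x^v) for every v ∈ 𝒱₁ ∪ 𝒱₂, w ∼ v, c ∈ 𝒜∖{a} with (a at v, c at w) ∈ ℬ_{{v,w}}(X); (4) (θ^w_a(x^v), x^v) for every v ∈ 𝒱₁ ∩ P₁, w ∼ v with (a at v, a at w) ∈ ℬ_{{v,w}}(X). Then M is the Gibbs cocycle of the nearest neighbour interaction V′; in particular M ∈ 𝐆_X. -/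

import Mathlib

open scoped Classical

namespace HC

variable {V : Type*} {A : Type*}

/-- The external vertex boundary of a set of vertices. -/
def boundary (G : SimpleGraph V) (F : Set V) : Set V :=
  {u | u ∉ F ∧ ∃ v ∈ F, G.Adj u v}

/-- The language of `X` on `F`: the set of patterns on `F` appearing in `X`. -/
def lang (X : Set (V → A)) (F : Set V) : Set (F → A) :=
  F.restrict '' X

/-- The `n`-ball around `v` in the graph metric. -/
def ballSet (G : SimpleGraph V) (v : V) (n : ℕ) : Set V :=
  {u | ∃ p : G.Walk v u, p.length ≤ n}

/-- Asymptotic pairs: pairs of configurations in `X` differing at finitely many sites. -/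
def Delta (X : Set (V → A)) : Set ((V → A) × (V → A)) :=
  {p | p.1 ∈ X ∧ p.2 ∈ X ∧ {v | p.1 v ≠ p.2 v}.Finite}

/-- Topological Markov field. -/
def IsTMF [TopologicalSpace A] (G : SimpleGraph V) (X : Set (V → A)) : Prop :=
  IsClosed X ∧
    ∀ x ∈ X, ∀ y ∈ X, ∀ F : Set V, F.Finite →
      (∀ u ∈ boundary G F, x u = y u) →
      (fun v => if v ∈ F then x v else y v) ∈ X

/-- Nearest neighbour constraint space: the set of configurations avoiding a
set of forbidden patterns on finite cliques. -/
def IsNNConstraint (G : SimpleGraph V) (X : Set (V → A)) : Prop :=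
  ∃ 𝓕 : ∀ F : Set V, Set (F → A),
    X = {x : V → A | ∀ F : Set V, F.Finite → G.IsClique F → F.restrict x ∉ 𝓕 F}

/-- `s` is a safe symbol for `X`. -/
def IsSafeSymbol (X : Set (V → A)) (s : A) : Prop :=
  ∀ x ∈ X, ∀ S : Set V, (fun v => if v ∈ S then x v else s) ∈ X

/-- The pattern `(c at v, d at w)` belongs to the language of `X`. -/
def edgeB (X : Set (V → A)) (v w : V) (c d : A) : Prop :=
  ∃ x ∈ X, x v = c ∧ x w = d

/-- The single-site pattern `c at v` belongs to the language of `X`. -/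
def siteB (X : Set (V → A)) (v : V) (c : A) : Prop :=
  ∃ x ∈ X, x v = c

/-- The pairs `(x,y)` and `(z,w)` are Markov-similar. -/
def MarkovSimilar (G : SimpleGraph V) (x y z w : V → A) : Prop :=
  ∃ S : Set V, S.Finite ∧
    (∀ u, u ∉ S → x u = y u ∧ z u = w u) ∧
    (∀ u, u ∈ S ∪ boundary G S → x u = z u ∧ y u = w u)

/-- A Markov cocycle on `X` (realised as a real function on pairs of
configurations, vanishing off the asymptotic relation `Δ_X`). -/
def IsMarkovCocycle (G : SimpleGraph V) (X : Set (V → A))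
    (M : (V → A) → (V → A) → ℝ) : Prop :=
  (∀ x y : V → A, (x, y) ∉ Delta X → M x y = 0) ∧
  (∀ x y z : V → A, (x, y) ∈ Delta X → (y, z) ∈ Delta X → M x z = M x y + M y z) ∧
  (∀ x y z w : V → A, (x, y) ∈ Delta X → (z, w) ∈ Delta X →
    MarkovSimilar G x y z w → M x y = M z w)

/-- A nearest neighbour interaction: a real weight for each pattern,
vanishing on patterns whose domain is not a finite clique. -/
def IsNNInteraction (G : SimpleGraph V) (U : ∀ F : Set V, (F → A) → ℝ) : Prop :=
  ∀ F : Set V, ¬(F.Finite ∧ G.IsClique F) → ∀ p : F → A, U F p = 0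

/-- `Σ_{F ⊆ V finite} (U(y|_F) - U(x|_F))`. -/
noncomputable def gibbsSum (U : ∀ F : Set V, (F → A) → ℝ) (x y : V → A) : ℝ :=
  ∑ᶠ F : Set V, (U F (F.restrict y) - U F (F.restrict x))

/-- A Gibbs cocycle with some nearest neighbour interaction. -/
def IsGibbsCocycle (G : SimpleGraph V) (X : Set (V → A))
    (M : (V → A) → (V → A) → ℝ) : Prop :=
  (∀ x y : V → A, (x, y) ∉ Delta X → M x y = 0) ∧
  ∃ U : ∀ F : Set V, (F → A) → ℝ, IsNNInteraction G U ∧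
    ∀ x y : V → A, (x, y) ∈ Delta X → M x y = gibbsSum U x y

/-- The space `𝐌_X` of Markov cocycles on `X`. -/
def markovSet (G : SimpleGraph V) (X : Set (V → A)) :
    Set ((V → A) → (V → A) → ℝ) :=
  {M | IsMarkovCocycle G X M}

/-- The space `𝐆_X` of Gibbs cocycles with nearest neighbour interactions on `X`. -/
def gibbsSet (G : SimpleGraph V) (X : Set (V → A)) :
    Set ((V → A) → (V → A) → ℝ) :=
  {M | IsGibbsCocycle G X M}

/-- `X` is Hammersley-Clifford: `𝐌_X = 𝐆_X`. -/
def IsHammersleyClifford (G : SimpleGraph V) (X : Set (V → A)) : Prop :=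
  markovSet G X = gibbsSet G X

/-- The action of a permutation of the vertices on configurations. -/
def confAct (g : Equiv.Perm V) (x : V → A) : V → A :=
  fun v => x (g⁻¹ v)

/-- `S` consists of automorphisms of the graph `G`. -/
def PreservesAdj (G : SimpleGraph V) (S : Subgroup (Equiv.Perm V)) : Prop :=
  ∀ g ∈ S, ∀ u v : V, G.Adj (g u) (g v) ↔ G.Adj u v

/-- `X` is invariant under the subgroup `S`. -/
def InvariantSpace (S : Subgroup (Equiv.Perm V)) (X : Set (V → A)) : Prop :=
  ∀ g ∈ S, confAct g '' X = X

/-- The cocycle `M` is `S`-invariant. -/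
def InvariantCocycle (S : Subgroup (Equiv.Perm V)) (M : (V → A) → (V → A) → ℝ) : Prop :=
  ∀ g ∈ S, ∀ x y : V → A, M (confAct g x) (confAct g y) = M x y

/-- The interaction `U` is `S`-invariant: `U(ga) = U(a)` for every pattern `a`. -/
def InvariantInteraction (S : Subgroup (Equiv.Perm V))
    (U : ∀ F : Set V, (F → A) → ℝ) : Prop :=
  ∀ g ∈ S, ∀ F : Set V, ∀ x : V → A,
    U (⇑g '' F) ((⇑g '' F).restrict (confAct g x)) = U F (F.restrict x)

/-- The space `𝐌^G_X` of `S`-invariant Markov cocycles on `X`. -/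
def markovSetInv (G : SimpleGraph V) (S : Subgroup (Equiv.Perm V)) (X : Set (V → A)) :
    Set ((V → A) → (V → A) → ℝ) :=
  {M | IsMarkovCocycle G X M ∧ InvariantCocycle S M}

/-- The space `𝐆^G_X` of Gibbs cocycles with `S`-invariant nearest neighbour
interactions on `X`. -/
def gibbsSetInv (G : SimpleGraph V) (S : Subgroup (Equiv.Perm V)) (X : Set (V → A)) :
    Set ((V → A) → (V → A) → ℝ) :=
  {M | (∀ x y : V → A, (x, y) ∉ Delta X → M x y = 0) ∧
    ∃ U : ∀ F : Set V, (F → A) → ℝ, IsNNInteraction G U ∧ InvariantInteraction S U ∧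
      ∀ x y : V → A, (x, y) ∈ Delta X → M x y = gibbsSum U x y}

/-- `X` is `G`-Hammersley-Clifford: `𝐌^G_X = 𝐆^G_X`. -/
def IsGHammersleyClifford (G : SimpleGraph V) (S : Subgroup (Equiv.Perm V))
    (X : Set (V → A)) : Prop :=
  markovSetInv G S X = gibbsSetInv G S X

/-- The symbol `a` can be folded into the symbol `b` in `X`. -/
def FoldsInto (G : SimpleGraph V) (X : Set (V → A)) (a b : A) : Prop :=
  a ≠ b ∧
    ∀ v₁ v₂ v₃ : V, G.Adj v₁ v₂ → G.Adj v₂ v₃ → ∀ c : A,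
      edgeB X v₁ v₂ a c →
        edgeB X v₁ v₂ b c ∧ edgeB X v₂ v₃ c b ∧
          ∃ x ∈ X, ∀ u ∈ boundary G (ballSet G v₁ 1), x u = b

/-- `X ∩ (𝒜∖{a})^𝒱`. -/
def foldSpace (X : Set (V → A)) (a : A) : Set (V → A) :=
  X ∩ {x | ∀ v, x v ≠ a}

/-- `Y` is a fold of `X` (and `X` an unfold of `Y`). -/
def IsFoldOf (G : SimpleGraph V) (Y X : Set (V → A)) : Prop :=
  ∃ a b : A, FoldsInto G X a b ∧ Y = foldSpace X a

/-- `P₁, P₂` are the partite classes of a bipartition of `G`. -/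
def IsBipartition (G : SimpleGraph V) (P₁ P₂ : Set V) : Prop :=
  (∀ v : V, v ∈ P₁ ∨ v ∈ P₂) ∧ Disjoint P₁ P₂ ∧
    ∀ u v : V, G.Adj u v → (u ∈ P₁ ∧ v ∈ P₂) ∨ (u ∈ P₂ ∧ v ∈ P₁)

/-- `G` is bipartite. -/
def Bipartite (G : SimpleGraph V) : Prop :=
  ∃ P₁ P₂ : Set V, IsBipartition G P₁ P₂

/-- `θ^v_c(x)`: change the value of `x` at `v` to `c`. -/
noncomputable def theta (x : V → A) (v : V) (c : A) : V → A :=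
  fun u => if u = v then c else x u

/-- `θ^{w₁,…,w_r}_{c₁,…,c_r}(x)`: change the value of `x` at each `w i` to `c i`. -/
noncomputable def multiUpdate (x : V → A) {r : ℕ} (w : Fin r → V) (c : Fin r → A) :
    V → A :=
  fun u => if h : ∃ i, w i = u then c h.choose else x u

/-- Restriction of a cocycle to the asymptotic pairs of a subspace `Y`. -/
noncomputable def restrictCocycle (Y : Set (V → A)) (M : (V → A) → (V → A) → ℝ) :
    (V → A) → (V → A) → ℝ :=
  fun x y => if (x, y) ∈ Delta Y then M x y else 0

/-- The pair `(x,y)` is `U`-good for the cocycle `M`. -/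
def VGood (M : (V → A) → (V → A) → ℝ) (U : ∀ F : Set V, (F → A) → ℝ)
    (x y : V → A) : Prop :=
  M x y = gibbsSum U x y

/-- `𝒱₁`: vertices `v` admitting a neighbour `w` with `(a,a) ∈ ℬ_{v,w}(X)`. -/
def Vone (G : SimpleGraph V) (X : Set (V → A)) (a : A) : Set V :=
  {v | ∃ w, G.Adj v w ∧ edgeB X v w a a}

/-- `𝒱₂`: vertices not in `𝒱₁` where the symbol `a` can appear. -/
def Vtwo (G : SimpleGraph V) (X : Set (V → A)) (a : A) : Set V :=
  {v | v ∉ Vone G X a ∧ siteB X v a}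

/-- The space of graph homomorphisms from `G` to `H`, as a configuration space. -/
def homSpace {B : Type*} (G : SimpleGraph V) (H : SimpleGraph B) : Set (V → B) :=
  {x | ∀ v w : V, G.Adj v w → H.Adj (x v) (x w)}

/-!
Let `N := M - (Gibbs cocycle of V')`: a Markov cocycle on `X` vanishing on `Δ_{X_a}` and on
the pairs (1)-(4); we show that it vanishes on `Δ_X`. Since `a` can be folded into `b`, turning
`a` into `b` at any set of sites stays inside `X`. Folding both members of a pair of `Δ_X` on the
finite window `D ∪ ∂D` around their difference set `D` leads to a pair that is Markov-similar to
a pair of `Δ_{X_a}`, so it suffices that `N(x, θ^v_b x) = 0` whenever `x_v = a`. If `v ∈ P₁`, or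
no neighbour of `v` carries `a`, this pair is similar to the one obtained from `x^v` by giving
it the neighbourhood of `x`; restoring the neighbourhood of `x^v` one site at a time only passes
through pairs of type (2), (3), (4) or pairs with no `a` nearby. If `v ∈ P₂`, fold the
`a`-neighbours of `v`, which lie in `P₁`, first.
-/

section Graph

variable {G : SimpleGraph V} {P₁ P₂ : Set V}

theorem IsBipartition.not_adj_of_adj_adj (hbip : IsBipartition G P₁ P₂) {u v t : V}
    (huv : G.Adj u v) (hvt : G.Adj v t) : ¬ G.Adj u t := by
  obtain ⟨-, hdisj, hadj⟩ := hbip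
  intro hut
  have d := Set.disjoint_left.mp hdisj
  rcases hadj u v huv with ⟨hu, hv⟩ | ⟨hu, hv⟩ <;>
    rcases hadj v t hvt with ⟨hv', ht⟩ | ⟨hv', ht⟩ <;>
    rcases hadj u t hut with ⟨hu', ht'⟩ | ⟨hu', ht'⟩ <;>
    first
      | exact d hv hv' | exact d hv' hv | exact d hu hu' | exact d hu' hu
      | exact d ht ht' | exact d ht' ht

theorem IsBipartition.mem_left_of_adj (hbip : IsBipartition G P₁ P₂) {v u : V}
    (hv : v ∈ P₂) (hvu : G.Adj v u) : u ∈ P₁ := by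
  rcases hbip.2.2 v u hvu with ⟨hv₁, -⟩ | ⟨-, hu⟩
  · exact absurd hv (Set.disjoint_left.mp hbip.2.1 hv₁)
  · exact hu

theorem IsBipartition.isClique_subsingleton_or_subset_pair (hbip : IsBipartition G P₁ P₂)
    {F : Set V} (hF : G.IsClique F) :
    F.Subsingleton ∨ ∃ u w, G.Adj u w ∧ F ⊆ {u, w} := by
  refine or_iff_not_imp_left.mpr fun hF₁ => ?_
  obtain ⟨u, hu, w, hw, huw⟩ := Set.not_subsingleton_iff.mp hF₁
  refine ⟨u, w, hF hu hw huw, fun t ht => ?_⟩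
  by_contra htuw
  simp only [Set.mem_insert_iff, Set.mem_singleton_iff, not_or] at htuw
  exact hbip.not_adj_of_adj_adj (hF hu hw huw) (hF hw ht (Ne.symm htuw.2))
    (hF hu ht (Ne.symm htuw.1))

theorem mem_ballSet_two_of_adj {v u : V} (h : G.Adj v u) : u ∈ ballSet G v 2 :=
  ⟨.cons h .nil, by simp⟩

theorem mem_ballSet_two_of_adj_adj {v u t : V} (hvu : G.Adj v u) (hut : G.Adj u t) :
    t ∈ ballSet G v 2 :=
  ⟨.cons hvu (.cons hut .nil), by simp⟩

theorem mem_ballSet_one_iff {v t : V} : t ∈ ballSet G v 1 ↔ t = v ∨ G.Adj v t := by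
  constructor
  · rintro ⟨p, hp⟩
    cases p with
    | nil => exact Or.inl rfl
    | cons h q =>
      rw [SimpleGraph.Walk.length_cons, add_le_iff_nonpos_left, Nat.le_zero] at hp
      cases SimpleGraph.Walk.eq_of_length_eq_zero hp
      exact Or.inr h
  · rintro (rfl | h)
    · exact ⟨.nil, by simp⟩
    · exact ⟨.cons h .nil, by simp⟩

theorem mem_boundary_singleton {u t : V} : t ∈ boundary G {u} ↔ t ≠ u ∧ G.Adj t u := by
  simp [boundary]

theorem finite_boundary (hlf : ∀ v, (G.neighborSet v).Finite) {D : Set V} (hD : D.Finite) :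
    (boundary G D).Finite :=
  (hD.biUnion fun d _ => hlf d).subset fun _ ⟨_, _, hd, hud⟩ =>
    Set.mem_biUnion hd hud.symm

end Graph

section Configurations

theorem theta_eq_update (x : V → A) (v : V) (c : A) : theta x v c = Function.update x v c := by
  funext u
  simp [theta, Function.update_apply]

theorem mem_Delta_symm {X : Set (V → A)} {x y : V → A} (h : (x, y) ∈ Delta X) :
    (y, x) ∈ Delta X :=
  ⟨h.2.1, h.1, by simpa only [ne_comm] using h.2.2⟩

theorem mem_Delta_trans {X : Set (V → A)} {x y z : V → A} (hxy : (x, y) ∈ Delta X)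
    (hyz : (y, z) ∈ Delta X) : (x, z) ∈ Delta X :=
  ⟨hxy.1, hyz.2.1, (hxy.2.2.union hyz.2.2).subset fun t ht => by
    by_contra h
    simp only [Set.mem_union, Set.mem_ofPred_eq, not_or, not_not] at h
    exact ht (h.1.trans h.2)⟩

theorem mem_Delta_of_eqOn_compl {X : Set (V → A)} {x y : V → A} {T : Set V} (hT : T.Finite)
    (hx : x ∈ X) (hy : y ∈ X) (hxy : ∀ t ∉ T, x t = y t) : (x, y) ∈ Delta X :=
  ⟨hx, hy, hT.subset fun t ht => by_contra fun h => ht (hxy t h)⟩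

theorem restrict_eq_of_eqOn {F : Set V} {x y : V → A} (h : Set.EqOn x y F) :
    F.restrict x = F.restrict y :=
  funext fun t => h t.2

end Configurations

section LocalRules

variable {G : SimpleGraph V} {P₁ P₂ : Set V} {X : Set (V → A)}

theorem edgeB.symm {u w : V} {c d : A} (h : edgeB X u w c d) : edgeB X w u d c :=
  let ⟨z, hz, hzu, hzw⟩ := h
  ⟨z, hz, hzw, hzu⟩

/-- The only cliques of a bipartite graph are vertices and edges. -/
theorem IsNNConstraint.mem_of_forall_edgeB (hbip : IsBipartition G P₁ P₂)
    (hX : IsNNConstraint G X) (hne : X.Nonempty) {y : V → A}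
    (hsite : ∀ u, siteB X u (y u))
    (hedge : ∀ u w, G.Adj u w → edgeB X u w (y u) (y w)) : y ∈ X := by
  obtain ⟨𝓕, rfl⟩ := hX
  intro F hF hclq
  obtain ⟨z, hz, hzy⟩ : ∃ z ∈ {x : V → A | ∀ F : Set V, F.Finite → G.IsClique F →
      F.restrict x ∉ 𝓕 F}, Set.EqOn y z F := by
    rcases hbip.isClique_subsingleton_or_subset_pair hclq with hF₁ | ⟨u, w, huw, hFuw⟩
    · rcases hF₁.eq_empty_or_singleton with rfl | ⟨u, rfl⟩
      · exact ⟨hne.some, hne.some_mem, Set.eqOn_empty _ _⟩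
      · obtain ⟨z, hz, hzu⟩ := hsite u
        exact ⟨z, hz, fun t ht => by rw [Set.mem_singleton_iff.mp ht, hzu]⟩
    · obtain ⟨z, hz, hzu, hzw⟩ := hedge u w huw
      refine ⟨z, hz, fun t ht => ?_⟩
      rcases hFuw ht with rfl | rfl
      exacts [hzu.symm, hzw.symm]
  rw [restrict_eq_of_eqOn hzy]
  exact hz F hF hclq

variable {a b : A}

theorem FoldsInto.edgeB_left (hfold : FoldsInto G X a b) {v w : V} (hvw : G.Adj v w) {c : A}
    (h : edgeB X v w a c) : edgeB X v w b c :=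
  (hfold.2 v w v hvw hvw.symm c h).1

theorem FoldsInto.edgeB_right (hfold : FoldsInto G X a b) {v w t : V} (hvw : G.Adj v w)
    (hwt : G.Adj w t) {c : A} (h : edgeB X v w a c) : edgeB X w t c b :=
  (hfold.2 v w t hvw hwt c h).2.1

noncomputable def foldAt (a b : A) (T : Set V) (x : V → A) : V → A :=
  fun t => if t ∈ T ∧ x t = a then b else x t

theorem foldAt_of_notMem {T : Set V} {x : V → A} {t : V} (ht : t ∉ T) :
    foldAt a b T x t = x t := by
  simp [foldAt, ht]

theorem foldAt_ne (hab : a ≠ b) {T : Set V} (x : V → A) {t : V} (ht : t ∈ T) :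
    foldAt a b T x t ≠ a := by
  unfold foldAt
  split_ifs with h
  · exact hab.symm
  · exact fun hxt => h ⟨ht, hxt⟩

theorem foldAt_singleton {x : V → A} {v : V} (hxv : x v = a) :
    foldAt a b {v} x = theta x v b := by
  funext t
  by_cases htv : t = v
  · subst htv; simp [foldAt, theta, hxv]
  · simp [foldAt, theta, htv]

theorem foldAt_insert {a b : A} {s : Set V} {u : V} (hu : u ∉ s) (x : V → A) :
    foldAt a b (insert u s) x = foldAt a b {u} (foldAt a b s x) := by
  funext t
  rcases eq_or_ne t u with rfl | htu
  · simp [foldAt, hu]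
  · simp [foldAt, htu]

theorem foldAt_eq_self {a b : A} {T : Set V} {x : V → A} (h : ∀ t ∈ T, x t ≠ a) :
    foldAt a b T x = x :=
  funext fun t => if_neg fun ht => h t ht.1 ht.2

theorem foldAt_mem (hbip : IsBipartition G P₁ P₂) (hX : IsNNConstraint G X)
    (hfold : FoldsInto G X a b) (hsite : ∀ u, siteB X u a → siteB X u b)
    {x : V → A} (hx : x ∈ X) (T : Set V) : foldAt a b T x ∈ X := by
  refine hX.mem_of_forall_edgeB hbip ⟨x, hx⟩ (fun u => ?_) (fun u w huw => ?_)
  · unfold foldAt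
    split_ifs with hu
    exacts [hsite u ⟨x, hx, hu.2⟩, ⟨x, hx, rfl⟩]
  · have hxx : edgeB X u w (x u) (x w) := ⟨x, hx, rfl, rfl⟩
    unfold foldAt
    split_ifs with hu hw hw
    · rw [hu.2, hw.2] at hxx
      exact (hfold.edgeB_left huw.symm (hfold.edgeB_left huw hxx).symm).symm
    · exact hfold.edgeB_left huw (hu.2 ▸ hxx)
    · exact (hfold.edgeB_left huw.symm (hw.2 ▸ hxx.symm)).symm
    · exact hxx

theorem theta_mem (hbip : IsBipartition G P₁ P₂) (hX : IsNNConstraint G X)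
    (hfold : FoldsInto G X a b) (hsite : ∀ u, siteB X u a → siteB X u b)
    {x : V → A} (hx : x ∈ X) {v : V} (hxv : x v = a) : theta x v b ∈ X :=
  foldAt_singleton hxv ▸ foldAt_mem hbip hX hfold hsite hx {v}

end LocalRules

section Cocycles

variable {G : SimpleGraph V} {X : Set (V → A)}

theorem finite_support_gibbsSum (hlf : ∀ v, (G.neighborSet v).Finite)
    {U : ∀ F : Set V, (F → A) → ℝ} (hU : IsNNInteraction G U) {x y : V → A}
    (hxy : {t | x t ≠ y t}.Finite) :
    (Function.support fun F : Set V => U F (F.restrict y) - U F (F.restrict x)).Finite := by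
  refine (hxy.biUnion fun d _ => ((hlf d).insert d).finite_subsets).subset fun F hF => ?_
  rw [Function.mem_support] at hF
  by_cases hFc : F.Finite ∧ G.IsClique F
  swap
  · exact absurd (by rw [hU F hFc, hU F hFc, sub_self]) hF
  obtain ⟨d, hdF, hd⟩ : ∃ d ∈ F, x d ≠ y d := by
    by_contra! h
    exact hF (by rw [restrict_eq_of_eqOn h, sub_self])
  refine Set.mem_biUnion hd fun t ht => ?_
  rcases eq_or_ne t d with rfl | htd
  · exact Set.mem_insert t _
  · exact Set.mem_insert_of_mem _ (hFc.2 hdF ht htd.symm)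

theorem gibbsSum_add (hlf : ∀ v, (G.neighborSet v).Finite)
    {U : ∀ F : Set V, (F → A) → ℝ} (hU : IsNNInteraction G U) {x y z : V → A}
    (hxy : {t | x t ≠ y t}.Finite) (hyz : {t | y t ≠ z t}.Finite) :
    gibbsSum U x z = gibbsSum U x y + gibbsSum U y z := by
  unfold gibbsSum
  rw [← finsum_add_distrib (finite_support_gibbsSum hlf hU hxy)
    (finite_support_gibbsSum hlf hU hyz)]
  exact finsum_congr fun F => by ring

/-- Only the cliques meeting `S` contribute, and those lie in `S ∪ ∂S`. -/
theorem gibbsSum_eq_of_markovSimilar {U : ∀ F : Set V, (F → A) → ℝ}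
    (hU : IsNNInteraction G U) {x y z w : V → A} (h : MarkovSimilar G x y z w) :
    gibbsSum U x y = gibbsSum U z w := by
  obtain ⟨S, -, hoff, hon⟩ := h
  refine finsum_congr fun F => ?_
  by_cases hFc : F.Finite ∧ G.IsClique F
  swap
  · simp only [hU F hFc]
  by_cases hFS : ∃ s ∈ F, s ∈ S
  · obtain ⟨s, hsF, hsS⟩ := hFS
    have hsub : ∀ u ∈ F, u ∈ S ∪ boundary G S := fun u hu => by
      by_cases huS : u ∈ S
      · exact Or.inl huS
      · exact Or.inr ⟨huS, s, hsS, hFc.2 hu hsF fun h => huS (h ▸ hsS)⟩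
    rw [restrict_eq_of_eqOn fun u hu => (hon u (hsub u hu)).1,
      restrict_eq_of_eqOn fun u hu => (hon u (hsub u hu)).2]
  · push Not at hFS
    rw [restrict_eq_of_eqOn fun u hu => (hoff u (hFS u hu)).1,
      restrict_eq_of_eqOn fun u hu => (hoff u (hFS u hu)).2, sub_self, sub_self]

theorem isMarkovCocycle_restrictCocycle_gibbsSum (hlf : ∀ v, (G.neighborSet v).Finite)
    {U : ∀ F : Set V, (F → A) → ℝ} (hU : IsNNInteraction G U) :
    IsMarkovCocycle G X (restrictCocycle X (gibbsSum U)) := by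
  refine ⟨fun x y h => if_neg h, fun x y z hxy hyz => ?_, fun x y z w hxy hzw h => ?_⟩
  · simp only [restrictCocycle, if_pos hxy, if_pos hyz, if_pos (mem_Delta_trans hxy hyz)]
    exact gibbsSum_add hlf hU hxy.2.2 hyz.2.2
  · simp only [restrictCocycle, if_pos hxy, if_pos hzw]
    exact gibbsSum_eq_of_markovSimilar hU h

theorem IsMarkovCocycle.sub {M M' : (V → A) → (V → A) → ℝ} (hM : IsMarkovCocycle G X M)
    (hM' : IsMarkovCocycle G X M') : IsMarkovCocycle G X fun x y => M x y - M' x y := by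
  refine ⟨fun x y h => by dsimp only; rw [hM.1 x y h, hM'.1 x y h, sub_zero],
    fun x y z hxy hyz => ?_, fun x y z w hxy hzw h => ?_⟩ <;> dsimp only
  · rw [hM.2.1 x y z hxy hyz, hM'.2.1 x y z hxy hyz]
    ring
  · rw [hM.2.2 x y z w hxy hzw h, hM'.2.2 x y z w hxy hzw h]

theorem sub_restrictCocycle_gibbsSum_eq_zero {M : (V → A) → (V → A) → ℝ}
    (hM : ∀ x y, (x, y) ∉ Delta X → M x y = 0) {U : ∀ F : Set V, (F → A) → ℝ} {x y : V → A}
    (h : VGood M U x y) : M x y - restrictCocycle X (gibbsSum U) x y = 0 := by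
  unfold restrictCocycle
  split_ifs with hxy
  · exact sub_eq_zero_of_eq h
  · rw [hM x y hxy, sub_zero]

variable {N : (V → A) → (V → A) → ℝ}

theorem eq_zero_of_update_steps {P : (V → A) → Prop} {z : V → A}
    (hadd : ∀ y₁ y₂ y₃, P y₁ → P y₂ → P y₃ → N y₁ y₃ = N y₁ y₂ + N y₂ y₃)
    (hz : P z) (hP : ∀ y u, P y → P (Function.update y u (z u)))
    (hstep : ∀ y u, P y → N y (Function.update y u (z u)) = 0) (s : Finset V) :
    ∀ y, P y → (∀ t ∉ s, y t = z t) → N y z = 0 := by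
  induction s using Finset.induction_on with
  | empty =>
    intro y hy hyz
    obtain rfl : y = z := funext fun t => hyz t (Finset.notMem_empty t)
    linarith [hadd y y y hy hy hy]
  | insert u s _ ih =>
    intro y hy hyz
    have hy' := hP y u hy
    rw [hadd y _ z hy hy' hz, hstep y u hy, ih _ hy' fun t ht => ?_, add_zero]
    rcases eq_or_ne t u with rfl | htu
    · simp
    · rw [Function.update_of_ne htu]
      exact hyz t (by simp [htu, ht])

theorem IsMarkovCocycle.apply_self (hN : IsMarkovCocycle G X N) (x : V → A) : N x x = 0 := by
  by_cases hx : (x, x) ∈ Delta X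
  · linarith [hN.2.1 x x x hx hx]
  · exact hN.1 x x hx

theorem IsMarkovCocycle.apply_swap (hN : IsMarkovCocycle G X N) (x y : V → A) :
    N y x = -N x y := by
  by_cases hxy : (x, y) ∈ Delta X
  · linarith [hN.2.1 x y x hxy (mem_Delta_symm hxy), hN.apply_self x]
  · have hyx : (y, x) ∉ Delta X := fun h => hxy (mem_Delta_symm h)
    rw [hN.1 x y hxy, hN.1 y x hyx, neg_zero]

theorem IsMarkovCocycle.apply_add_of_eqOn_compl (hN : IsMarkovCocycle G X N) {T : Set V}
    (hT : T.Finite) {x y z : V → A} (hx : x ∈ X) (hy : y ∈ X) (hz : z ∈ X)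
    (hxy : ∀ t ∉ T, x t = y t) (hyz : ∀ t ∉ T, y t = z t) : N x z = N x y + N y z :=
  hN.2.1 x y z (mem_Delta_of_eqOn_compl hT hx hy hxy) (mem_Delta_of_eqOn_compl hT hy hz hyz)

theorem IsMarkovCocycle.apply_eq_of_eqOn {x y z w : V → A} (hN : IsMarkovCocycle G X N)
    {S : Set V} (hS : S.Finite) (hx : x ∈ X) (hy : y ∈ X) (hz : z ∈ X) (hw : w ∈ X)
    (hxy : ∀ t ∉ S, x t = y t) (hzw : ∀ t ∉ S, z t = w t)
    (hon : ∀ t ∈ S ∪ boundary G S, x t = z t ∧ y t = w t) : N x y = N z w :=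
  hN.2.2 x y z w (mem_Delta_of_eqOn_compl hS hx hy hxy) (mem_Delta_of_eqOn_compl hS hz hw hzw)
    ⟨S, hS, fun t ht => ⟨hxy t ht, hzw t ht⟩, hon⟩

theorem IsMarkovCocycle.apply_update_eq (hN : IsMarkovCocycle G X N) {x z : V → A} {u : V}
    {c : A} (hx : x ∈ X) (hx' : Function.update x u c ∈ X) (hz : z ∈ X)
    (hz' : Function.update z u c ∈ X) (hxz : ∀ t, t = u ∨ G.Adj t u → x t = z t) :
    N x (Function.update x u c) = N z (Function.update z u c) := by
  refine hN.apply_eq_of_eqOn (Set.finite_singleton u) hx hx' hz hz'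
    (fun t ht => (Function.update_of_ne ht _ _).symm)
    (fun t ht => (Function.update_of_ne ht _ _).symm) fun t ht => ?_
  rcases ht with rfl | ht
  · simp [hxz t (Or.inl rfl)]
  · obtain ⟨htu, hadj⟩ := mem_boundary_singleton.mp ht
    simp [Function.update_of_ne htu, hxz t (Or.inr hadj)]

end Cocycles

structure FoldSetting (G : SimpleGraph V) (P₁ P₂ : Set V) (X : Set (V → A)) (a b : A)
    (xv : V → V → A) : Prop where
  locallyFinite : ∀ v, (G.neighborSet v).Finite
  bipartition : IsBipartition G P₁ P₂
  nnConstraint : IsNNConstraint G X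
  foldsInto : FoldsInto G X a b
  xv_mem : ∀ v ∈ Vone G X a ∪ Vtwo G X a, xv v ∈ X
  xv_of_vone : ∀ v ∈ Vone G X a, xv v v = a ∧ ∀ u ∈ ballSet G v 2, u ≠ v → xv v u = b
  xv_of_vtwo : ∀ v ∈ Vtwo G X a, xv v v = a ∧ ∀ u ∈ boundary G (ballSet G v 1), xv v u = b
  theta_xv_mem : ∀ v ∈ Vone G X a ∪ Vtwo G X a, theta (xv v) v b ∈ foldSpace X a

structure VanishesOnSpecialPairs (G : SimpleGraph V) (P₁ : Set V) (X : Set (V → A))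
    (a b : A) (xv : V → V → A) (N : (V → A) → (V → A) → ℝ) : Prop where
  fold : ∀ p ∈ Delta (foldSpace X a), N p.1 p.2 = 0
  theta_xv : ∀ v ∈ Vone G X a ∪ Vtwo G X a, N (theta (xv v) v b) (xv v) = 0
  theta_xv_nbr : ∀ v ∈ Vone G X a ∪ Vtwo G X a, ∀ w, G.Adj v w → ∀ c, c ≠ a →
    edgeB X v w a c → N (theta (xv v) w c) (xv v) = 0
  theta_xv_nbr_a : ∀ v ∈ Vone G X a ∩ P₁, ∀ w, G.Adj v w → edgeB X v w a a →
    N (theta (xv v) w a) (xv v) = 0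

theorem mem_vone_union_vtwo_of_siteB {G : SimpleGraph V} {X : Set (V → A)} {a : A} {v : V}
    (hv : siteB X v a) : v ∈ Vone G X a ∪ Vtwo G X a := by
  by_cases hv₁ : v ∈ Vone G X a
  exacts [Or.inl hv₁, Or.inr ⟨hv₁, hv⟩]

namespace FoldSetting

variable {G : SimpleGraph V} {P₁ P₂ : Set V} {X : Set (V → A)} {a b : A} {xv : V → V → A}
  {N : (V → A) → (V → A) → ℝ}

theorem siteB_b (S : FoldSetting G P₁ P₂ X a b xv) {u : V} (hu : siteB X u a) :
    siteB X u b :=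
  ⟨theta (xv u) u b, (S.theta_xv_mem u (mem_vone_union_vtwo_of_siteB hu)).1, by simp [theta]⟩

theorem foldAt_mem (S : FoldSetting G P₁ P₂ X a b xv) {x : V → A} (hx : x ∈ X)
    (T : Set V) : foldAt a b T x ∈ X :=
  HC.foldAt_mem S.bipartition S.nnConstraint S.foldsInto (fun _ => S.siteB_b) hx T

theorem theta_mem (S : FoldSetting G P₁ P₂ X a b xv) {x : V → A} (hx : x ∈ X) {v : V}
    (hxv : x v = a) : theta x v b ∈ X :=
  HC.theta_mem S.bipartition S.nnConstraint S.foldsInto (fun _ => S.siteB_b) hx hxv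

theorem xv_self (S : FoldSetting G P₁ P₂ X a b xv) {v : V}
    (hv : v ∈ Vone G X a ∪ Vtwo G X a) : xv v v = a := by
  rcases hv with hv | hv
  exacts [(S.xv_of_vone v hv).1, (S.xv_of_vtwo v hv).1]

theorem xv_ne_of_adj (S : FoldSetting G P₁ P₂ X a b xv) {v u : V}
    (hv : v ∈ Vone G X a ∪ Vtwo G X a) (hvu : G.Adj v u) : xv v u ≠ a := by
  rcases hv with hv | hv
  · rw [(S.xv_of_vone v hv).2 u (mem_ballSet_two_of_adj hvu) hvu.ne']
    exact S.foldsInto.1.symm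
  · exact fun h => hv.1 ⟨u, hvu, xv v, S.xv_mem v (Or.inr hv), S.xv_self (Or.inr hv), h⟩

theorem xv_eq_of_adj_adj (S : FoldSetting G P₁ P₂ X a b xv) {v u t : V}
    (hv : v ∈ Vone G X a ∪ Vtwo G X a) (hvu : G.Adj v u) (hut : G.Adj u t) (htv : t ≠ v) :
    xv v t = b := by
  rcases hv with hv | hv
  · exact (S.xv_of_vone v hv).2 t (mem_ballSet_two_of_adj_adj hvu hut) htv
  · refine (S.xv_of_vtwo v hv).2 t ⟨fun ht => ?_, u, mem_ballSet_one_iff.mpr (Or.inr hvu),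
      hut.symm⟩
    rcases mem_ballSet_one_iff.mp ht with rfl | hvt
    exacts [htv rfl, S.bipartition.not_adj_of_adj_adj hvu hut hvt]

theorem apply_eq_zero_of_ne_on (S : FoldSetting G P₁ P₂ X a b xv)
    (hN : IsMarkovCocycle G X N) (hfold : ∀ p ∈ Delta (foldSpace X a), N p.1 p.2 = 0)
    {D : Set V} (hD : D.Finite) {x y : V → A} (hx : x ∈ X) (hy : y ∈ X)
    (hxy : ∀ t ∉ D, x t = y t) (hne : ∀ t ∈ D ∪ boundary G D, x t ≠ a ∧ y t ≠ a) :
    N x y = 0 := by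
  have hfx := S.foldAt_mem hx Set.univ
  have hfy := S.foldAt_mem hy Set.univ
  have hoff : ∀ t ∉ D, foldAt a b Set.univ x t = foldAt a b Set.univ y t := fun t ht => by
    unfold foldAt
    rw [hxy t ht]
  rw [hN.apply_eq_of_eqOn hD hx hy hfx hfy hxy hoff fun t ht => ⟨?_, ?_⟩]
  · exact hfold _ <| mem_Delta_of_eqOn_compl hD
      ⟨hfx, fun t => foldAt_ne S.foldsInto.1 x (Set.mem_univ t)⟩
      ⟨hfy, fun t => foldAt_ne S.foldsInto.1 y (Set.mem_univ t)⟩ hoff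
  · exact (if_neg fun h => (hne t ht).1 h.2).symm
  · exact (if_neg fun h => (hne t ht).2 h.2).symm

theorem apply_foldAt_eq_zero (S : FoldSetting G P₁ P₂ X a b xv)
    (hN : IsMarkovCocycle G X N) {x : V → A} (hx : x ∈ X) (s : Finset V)
    (hflip : ∀ u ∈ s, ∀ y ∈ X, y u = a → N y (theta y u b) = 0) :
    N x (foldAt a b s x) = 0 := by
  induction s using Finset.induction_on with
  | empty =>
    rw [Finset.coe_empty, foldAt_eq_self fun t ht => absurd ht (Set.notMem_empty t)]
    exact hN.apply_self x
  | insert u s hu ih =>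
    have hy := S.foldAt_mem hx s
    rw [Finset.coe_insert, foldAt_insert (Finset.mem_coe.not.mpr hu),
      hN.apply_add_of_eqOn_compl (insert u s).finite_toSet hx hy (S.foldAt_mem hy {u})
        (fun t ht => (foldAt_of_notMem (ht ∘ Finset.mem_coe.mpr ∘ Finset.mem_insert_of_mem)).symm)
        (fun t ht => (foldAt_of_notMem fun h => ht (by
          rw [Set.mem_singleton_iff.mp (h : t ∈ ({u} : Set V))]; simp)).symm),
      ih fun t ht => hflip t (Finset.mem_insert_of_mem ht), zero_add]
    by_cases hyu : foldAt a b s x u = a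
    · rw [foldAt_singleton hyu]
      exact hflip u (Finset.mem_insert_self u s) _ hy hyu
    · rw [foldAt_eq_self (T := {u}) fun t ht => Set.mem_singleton_iff.mp ht ▸ hyu]
      exact hN.apply_self _

end FoldSetting

/-- The configurations passed through while the neighbourhood of `v` in `x^v` is traded for
that of another configuration. -/
def nbrVariants (G : SimpleGraph V) (P₁ : Set V) (X : Set (V → A)) (a : A) (xv : V → V → A)
    (v : V) : Set (V → A) :=
  {y | ∀ t, (G.Adj v t → edgeB X v t a (y t) ∧ (y t = a → v ∈ P₁)) ∧
    (¬ G.Adj v t → y t = xv v t)}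

theorem update_mem_nbrVariants {G : SimpleGraph V} {P₁ : Set V} {X : Set (V → A)} {a : A}
    {xv : V → V → A} {v : V} {y y' : V → A} (hy : y ∈ nbrVariants G P₁ X a xv v)
    (hy' : y' ∈ nbrVariants G P₁ X a xv v) (u : V) :
    Function.update y u (y' u) ∈ nbrVariants G P₁ X a xv v := by
  intro t
  rcases eq_or_ne t u with rfl | htu
  · simpa using hy' t
  · simpa [Function.update_of_ne htu] using hy t

namespace FoldSetting

variable {G : SimpleGraph V} {P₁ P₂ : Set V} {X : Set (V → A)} {a b : A} {xv : V → V → A}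
  {N : (V → A) → (V → A) → ℝ} {v : V}

theorem xv_mem_nbrVariants (S : FoldSetting G P₁ P₂ X a b xv)
    (hv : v ∈ Vone G X a ∪ Vtwo G X a) : xv v ∈ nbrVariants G P₁ X a xv v :=
  fun _ => ⟨fun hvt => ⟨⟨xv v, S.xv_mem v hv, S.xv_self hv, rfl⟩,
    fun h => absurd h (S.xv_ne_of_adj hv hvt)⟩, fun _ => rfl⟩

theorem apply_self_of_mem_nbrVariants (S : FoldSetting G P₁ P₂ X a b xv)
    (hv : v ∈ Vone G X a ∪ Vtwo G X a) {y : V → A} (hy : y ∈ nbrVariants G P₁ X a xv v) :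
    y v = a :=
  ((hy v).2 G.irrefl).trans (S.xv_self hv)

/-- Gluing is legal because every vertex at distance two from `v` carries `b` in `x^v`, and
`a` can be folded into `b`. -/
theorem mem_of_mem_nbrVariants (S : FoldSetting G P₁ P₂ X a b xv)
    (hv : v ∈ Vone G X a ∪ Vtwo G X a) {y : V → A} (hy : y ∈ nbrVariants G P₁ X a xv v) :
    y ∈ X := by
  have hxv := S.xv_mem v hv
  have hnbr : ∀ u w, G.Adj v u → G.Adj u w → edgeB X u w (y u) (y w) := by
    intro u w hvu huw
    have hedge := ((hy u).1 hvu).1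
    rcases eq_or_ne w v with rfl | hwv
    · rw [S.apply_self_of_mem_nbrVariants hv hy]
      exact hedge.symm
    · rw [(hy w).2 (S.bipartition.not_adj_of_adj_adj hvu huw),
        S.xv_eq_of_adj_adj hv hvu huw hwv]
      exact S.foldsInto.edgeB_right hvu huw hedge
  refine S.nnConstraint.mem_of_forall_edgeB S.bipartition ⟨_, hxv⟩ (fun u => ?_)
    fun u w huw => ?_
  · by_cases hvu : G.Adj v u
    · obtain ⟨z, hz, -, hzu⟩ := ((hy u).1 hvu).1
      exact ⟨z, hz, hzu⟩
    · exact ⟨xv v, hxv, ((hy u).2 hvu).symm⟩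
  · by_cases hvu : G.Adj v u
    · exact hnbr u w hvu huw
    by_cases hvw : G.Adj v w
    · exact (hnbr w u hvw huw.symm).symm
    rw [(hy u).2 hvu, (hy w).2 hvw]
    exact ⟨xv v, hxv, rfl, rfl⟩

theorem apply_update_nbrVariants_eq_zero (S : FoldSetting G P₁ P₂ X a b xv)
    (hN : IsMarkovCocycle G X N) (hN₀ : VanishesOnSpecialPairs G P₁ X a b xv N)
    (hv : v ∈ Vone G X a ∪ Vtwo G X a) {y : V → A} (hy : y ∈ nbrVariants G P₁ X a xv v)
    (u : V) : N y (Function.update y u (xv v u)) = 0 := by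
  by_cases hvu : G.Adj v u
  swap
  · rw [← (hy u).2 hvu, Function.update_eq_self]
    exact hN.apply_self y
  have hxv := S.xv_mem_nbrVariants hv
  have hz := update_mem_nbrVariants hxv hy u
  rw [hN.apply_update_eq (S.mem_of_mem_nbrVariants hv hy)
      (S.mem_of_mem_nbrVariants hv (update_mem_nbrVariants hy hxv u))
      (S.mem_of_mem_nbrVariants hv hz)
      (by rw [Function.update_idem, Function.update_eq_self]; exact S.xv_mem v hv) ?_,
    Function.update_idem, Function.update_eq_self, ← theta_eq_update]
  · obtain ⟨hedge, hP₁⟩ := (hy u).1 hvu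
    by_cases hyu : y u = a
    · rw [hyu] at hedge ⊢
      exact hN₀.theta_xv_nbr_a v ⟨⟨u, hvu, hedge⟩, hP₁ hyu⟩ u hvu hedge
    · exact hN₀.theta_xv_nbr v hv u hvu (y u) hyu hedge
  · rintro t (rfl | htu)
    · simp
    · rw [Function.update_of_ne htu.ne, (hy t).2 (S.bipartition.not_adj_of_adj_adj hvu htu.symm)]

theorem apply_theta_update_nbrVariants_eq_zero (S : FoldSetting G P₁ P₂ X a b xv)
    (hN : IsMarkovCocycle G X N) (hN₀ : VanishesOnSpecialPairs G P₁ X a b xv N)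
    (hv : v ∈ Vone G X a ∪ Vtwo G X a) {y : V → A} (hy : y ∈ nbrVariants G P₁ X a xv v)
    (u : V) : N (theta y v b) (theta (Function.update y u (xv v u)) v b) = 0 := by
  by_cases hvu : G.Adj v u
  swap
  · rw [← (hy u).2 hvu, Function.update_eq_self]
    exact hN.apply_self _
  have hy' := update_mem_nbrVariants hy (S.xv_mem_nbrVariants hv) u
  have hz := S.theta_mem (S.mem_of_mem_nbrVariants hv hy) (S.apply_self_of_mem_nbrVariants hv hy)
  have hz' := S.theta_mem (S.mem_of_mem_nbrVariants hv hy')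
    (S.apply_self_of_mem_nbrVariants hv hy')
  simp only [theta_eq_update] at hz hz' ⊢
  rw [Function.update_comm hvu.ne'] at hz' ⊢
  set z := Function.update y v b
  have hzu : z u = y u := Function.update_of_ne hvu.ne' _ _
  have hzb : ∀ t, G.Adj t u → z t = b := by
    intro t htu
    rcases eq_or_ne t v with rfl | htv
    · simp [z]
    · rw [show z t = y t from Function.update_of_ne htv _ _,
        (hy t).2 (S.bipartition.not_adj_of_adj_adj hvu htu.symm),
        S.xv_eq_of_adj_adj hv hvu htu.symm htv]
  by_cases hyu : y u = a
  · have hedge := ((hy u).1 hvu).1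
    rw [hyu] at hedge
    have hu₁ : u ∈ Vone G X a := ⟨v, hvu.symm, hedge.symm⟩
    have hxvu : xv v u = b := (S.xv_of_vone v ⟨u, hvu, hedge⟩).2 u
      (mem_ballSet_two_of_adj hvu) hvu.ne'
    have hθu := (S.theta_xv_mem u (Or.inl hu₁)).1
    rw [theta_eq_update] at hθu
    rw [hxvu] at hz' ⊢
    rw [hN.apply_update_eq hz hz' (S.xv_mem u (Or.inl hu₁)) hθu, ← theta_eq_update,
      hN.apply_swap, hN₀.theta_xv u (Or.inl hu₁), neg_zero]
    rintro t (rfl | htu)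
    · rw [hzu, hyu, (S.xv_of_vone t hu₁).1]
    · rw [hzb t htu, (S.xv_of_vone u hu₁).2 t (mem_ballSet_two_of_adj htu.symm) htu.ne]
  · refine S.apply_eq_zero_of_ne_on hN hN₀.fold (Set.finite_singleton u) hz hz'
      (fun t ht => (Function.update_of_ne ht _ _).symm) fun t ht => ?_
    rcases ht with rfl | ht
    · rw [hzu, Function.update_self]
      exact ⟨hyu, S.xv_ne_of_adj hv hvu⟩
    · obtain ⟨htu, hadj⟩ := mem_boundary_singleton.mp ht
      rw [Function.update_of_ne htu, hzb t hadj]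
      exact ⟨S.foldsInto.1.symm, S.foldsInto.1.symm⟩

theorem apply_nbrVariants_xv_eq_zero (S : FoldSetting G P₁ P₂ X a b xv)
    (hN : IsMarkovCocycle G X N) (hN₀ : VanishesOnSpecialPairs G P₁ X a b xv N)
    (hv : v ∈ Vone G X a ∪ Vtwo G X a) {y : V → A} (hy : y ∈ nbrVariants G P₁ X a xv v) :
    N y (xv v) = 0 ∧ N (theta y v b) (theta (xv v) v b) = 0 := by
  have hxv := S.xv_mem_nbrVariants hv
  have hfin := S.locallyFinite v
  have hoff : ∀ y' ∈ nbrVariants G P₁ X a xv v, ∀ t ∉ G.neighborSet v, y' t = xv v t :=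
    fun y' hy' t ht => (hy' t).2 ht
  have hθoff : ∀ y' ∈ nbrVariants G P₁ X a xv v, ∀ t ∉ G.neighborSet v,
      theta y' v b t = theta (xv v) v b t := fun y' hy' t ht => by
    unfold theta
    split_ifs
    exacts [rfl, hoff y' hy' t ht]
  have hmem := fun y' (hy' : y' ∈ nbrVariants G P₁ X a xv v) =>
    S.mem_of_mem_nbrVariants hv hy'
  have hθmem := fun y' (hy' : y' ∈ nbrVariants G P₁ X a xv v) =>
    S.theta_mem (hmem y' hy') (S.apply_self_of_mem_nbrVariants hv hy')
  have hs : ∀ t ∉ hfin.toFinset, y t = xv v t := fun t ht =>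
    hoff y hy t (by simpa using ht)
  refine ⟨eq_zero_of_update_steps (P := (· ∈ nbrVariants G P₁ X a xv v)) ?_ hxv
      (fun y' u hy' => update_mem_nbrVariants hy' hxv u)
      (fun y' u hy' => S.apply_update_nbrVariants_eq_zero hN hN₀ hv hy' u) _ y hy hs,
    eq_zero_of_update_steps (P := (· ∈ nbrVariants G P₁ X a xv v))
      (N := fun y₁ y₂ => N (theta y₁ v b) (theta y₂ v b)) ?_ hxv
      (fun y' u hy' => update_mem_nbrVariants hy' hxv u)
      (fun y' u hy' => S.apply_theta_update_nbrVariants_eq_zero hN hN₀ hv hy' u) _ y hy hs⟩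
  · intro y₁ y₂ y₃ h₁ h₂ h₃
    exact hN.apply_add_of_eqOn_compl hfin (hmem _ h₁) (hmem _ h₂) (hmem _ h₃)
      (fun t ht => (hoff _ h₁ t ht).trans (hoff _ h₂ t ht).symm)
      (fun t ht => (hoff _ h₂ t ht).trans (hoff _ h₃ t ht).symm)
  · intro y₁ y₂ y₃ h₁ h₂ h₃
    exact hN.apply_add_of_eqOn_compl hfin (hθmem _ h₁) (hθmem _ h₂) (hθmem _ h₃)
      (fun t ht => (hθoff _ h₁ t ht).trans (hθoff _ h₂ t ht).symm)
      (fun t ht => (hθoff _ h₂ t ht).trans (hθoff _ h₃ t ht).symm)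

/-- Replace the neighbourhood of `v` in `x^v` by that of `x`, one neighbour at a time, both
before and after flipping `v`; pair (2) closes the square. -/
theorem apply_theta_eq_zero_of_mem_left_or (S : FoldSetting G P₁ P₂ X a b xv)
    (hN : IsMarkovCocycle G X N) (hN₀ : VanishesOnSpecialPairs G P₁ X a b xv N)
    {x : V → A} (hx : x ∈ X) (hxv : x v = a) (hnbr : v ∈ P₁ ∨ ∀ u, G.Adj v u → x u ≠ a) :
    N x (theta x v b) = 0 := by
  have hv := mem_vone_union_vtwo_of_siteB (G := G) ⟨x, hx, hxv⟩
  set y : V → A := fun t => if G.Adj v t then x t else xv v t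
  have hy : y ∈ nbrVariants G P₁ X a xv v := fun t =>
    ⟨fun hvt => by
      simp only [y, if_pos hvt]
      exact ⟨⟨x, hx, hxv, rfl⟩, fun hxt => hnbr.resolve_right fun h => h t hvt hxt⟩,
    fun hvt => if_neg hvt⟩
  obtain ⟨h₁, h₂⟩ := S.apply_nbrVariants_xv_eq_zero hN hN₀ hv hy
  have hyX := S.mem_of_mem_nbrVariants hv hy
  have hyv := S.apply_self_of_mem_nbrVariants hv hy
  have hT := (S.locallyFinite v).insert v
  have hoff : ∀ y' : V → A, ∀ t ∉ insert v (G.neighborSet v), theta y' v b t = y' t :=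
    fun y' t ht => if_neg fun h => ht (Or.inl h)
  have hyoff : ∀ t ∉ insert v (G.neighborSet v), y t = xv v t :=
    fun t ht => if_neg fun h => ht (Or.inr h)
  have hsim : N x (theta x v b) = N y (theta y v b) := by
    simp only [theta_eq_update]
    refine hN.apply_update_eq hx ?_ hyX ?_ ?_
    · simpa only [theta_eq_update] using S.theta_mem hx hxv
    · simpa only [theta_eq_update] using S.theta_mem hyX hyv
    · rintro t (rfl | htv)
      · rw [hxv, hyv]
      · exact (if_pos htv.symm).symm
  rw [hsim, hN.apply_add_of_eqOn_compl hT hyX (S.xv_mem v hv) (S.theta_mem hyX hyv) hyoff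
      fun t ht => ((hoff _ t ht).trans (hyoff t ht)).symm,
    hN.apply_add_of_eqOn_compl hT (S.xv_mem v hv) (S.theta_xv_mem v hv).1
      (S.theta_mem hyX hyv) (fun t ht => (hoff _ t ht).symm)
      fun t ht => (hoff _ t ht).trans ((hoff _ t ht).trans (hyoff t ht)).symm,
    h₁, hN.apply_swap, hN₀.theta_xv v hv, hN.apply_swap (theta y v b), h₂]
  ring

theorem apply_theta_eq_zero (S : FoldSetting G P₁ P₂ X a b xv) (hN : IsMarkovCocycle G X N)
    (hN₀ : VanishesOnSpecialPairs G P₁ X a b xv N) {x : V → A} (hx : x ∈ X) (hxv : x v = a) :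
    N x (theta x v b) = 0 := by
  rcases S.bipartition.1 v with hv | hv
  · exact S.apply_theta_eq_zero_of_mem_left_or hN hN₀ hx hxv (Or.inl hv)
  have hfin := S.locallyFinite v
  set s := hfin.toFinset
  have hs : (s : Set V) = G.neighborSet v := hfin.coe_toFinset
  have hflip : ∀ u ∈ s, ∀ y ∈ X, y u = a → N y (theta y u b) = 0 := fun u hu y hy hyu =>
    S.apply_theta_eq_zero_of_mem_left_or hN hN₀ hy hyu
      (Or.inl (S.bipartition.mem_left_of_adj hv (hfin.mem_toFinset.mp hu)))
  have hvs : v ∉ (s : Set V) := hs ▸ G.irrefl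
  have hθx := S.theta_mem hx hxv
  have hx' := S.foldAt_mem hx s
  have hx'v : foldAt a b s x v = a := (foldAt_of_notMem hvs).trans hxv
  have hθx' := S.theta_mem hx' hx'v
  have hθ : foldAt a b s (theta x v b) = theta (foldAt a b s x) v b := by
    funext t
    rcases eq_or_ne t v with rfl | htv
    · simp [foldAt, theta, hvs]
    · simp [foldAt, theta, htv]
  have h₁ := S.apply_foldAt_eq_zero hN hx s hflip
  have h₂ := S.apply_theta_eq_zero_of_mem_left_or hN hN₀ hx' hx'v
    (Or.inr fun u hvu => foldAt_ne S.foldsInto.1 x (hs ▸ hvu))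
  have h₃ := S.apply_foldAt_eq_zero hN hθx s hflip
  rw [hθ] at h₃
  have hT := (insert v s).finite_toSet
  have hoff : ∀ y : V → A, ∀ t ∉ ((insert v s : Finset V) : Set V), foldAt a b s y t = y t :=
    fun y t ht => foldAt_of_notMem fun h => ht (Finset.mem_insert_of_mem h)
  have hθoff : ∀ y : V → A, ∀ t ∉ ((insert v s : Finset V) : Set V), theta y v b t = y t :=
    fun y t ht => if_neg fun (h : t = v) => ht (by simp [h])
  rw [hN.apply_add_of_eqOn_compl hT hx hx' hθx (fun t ht => (hoff x t ht).symm)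
      fun t ht => (hoff x t ht).trans (hθoff x t ht).symm,
    hN.apply_add_of_eqOn_compl hT hx' hθx' hθx
      (fun t ht => (hθoff _ t ht).symm)
      fun t ht => (hθoff _ t ht).trans ((hoff x t ht).trans (hθoff x t ht).symm),
    h₁, h₂, hN.apply_swap, h₃]
  ring

theorem apply_eq_zero (S : FoldSetting G P₁ P₂ X a b xv) (hN : IsMarkovCocycle G X N)
    (hN₀ : VanishesOnSpecialPairs G P₁ X a b xv N) {x y : V → A} (hxy : (x, y) ∈ Delta X) :
    N x y = 0 := by
  obtain ⟨hx, hy, hD⟩ : x ∈ X ∧ y ∈ X ∧ {t | x t ≠ y t}.Finite := hxy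
  set D := {t | x t ≠ y t}
  have hK : (D ∪ boundary G D).Finite := hD.union (finite_boundary S.locallyFinite hD)
  have hflip : ∀ u ∈ hK.toFinset, ∀ z ∈ X, z u = a → N z (theta z u b) = 0 :=
    fun u _ z hz hzu => S.apply_theta_eq_zero hN hN₀ hz hzu
  have h₁ := S.apply_foldAt_eq_zero hN hx _ hflip
  have h₂ := S.apply_foldAt_eq_zero hN hy _ hflip
  rw [hK.coe_toFinset] at h₁ h₂
  have hx' := S.foldAt_mem hx (D ∪ boundary G D)
  have hy' := S.foldAt_mem hy (D ∪ boundary G D)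
  have hxy : ∀ t ∉ D, x t = y t := fun t ht => not_not.mp ht
  have h₃ := S.apply_eq_zero_of_ne_on hN hN₀.fold hD hx' hy'
    (fun t ht => by unfold foldAt; rw [hxy t ht])
    fun t ht => ⟨foldAt_ne S.foldsInto.1 x ht, foldAt_ne S.foldsInto.1 y ht⟩
  have hoff : ∀ z : V → A, ∀ t ∉ D ∪ boundary G D, foldAt a b (D ∪ boundary G D) z t = z t :=
    fun z t ht => foldAt_of_notMem ht
  have hxy' : ∀ t ∉ D ∪ boundary G D, x t = y t := fun t ht => hxy t fun h => ht (Or.inl h)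
  rw [hN.apply_add_of_eqOn_compl hK hx hx' hy (fun t ht => (hoff x t ht).symm)
      fun t ht => (hoff x t ht).trans (hxy' t ht),
    hN.apply_add_of_eqOn_compl hK hx' hy' hy
      (fun t ht => (hoff x t ht).trans ((hxy' t ht).trans (hoff y t ht).symm))
      (hoff y),
    h₁, h₃, hN.apply_swap, h₂]
  ring

end FoldSetting

theorem statement15_general
    (G : SimpleGraph V) (hlf : ∀ v : V, (G.neighborSet v).Finite)
    (P₁ P₂ : Set V) (hbip : IsBipartition G P₁ P₂)
    (X : Set (V → A)) (hX : IsNNConstraint G X)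
    (a b : A) (hfold : FoldsInto G X a b)
    (xv : V → V → A)
    (hxvX : ∀ v ∈ Vone G X a ∪ Vtwo G X a, xv v ∈ X)
    (hxv1 : ∀ v ∈ Vone G X a,
      xv v v = a ∧ ∀ u ∈ ballSet G v 2, u ≠ v → xv v u = b)
    (hxv2 : ∀ v ∈ Vtwo G X a,
      xv v v = a ∧ ∀ u ∈ boundary G (ballSet G v 1), xv v u = b)
    (hxvfold : ∀ v ∈ Vone G X a ∪ Vtwo G X a, theta (xv v) v b ∈ foldSpace X a)
    (M : (V → A) → (V → A) → ℝ) (hM : IsMarkovCocycle G X M)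
    (V' : ∀ F : Set V, (F → A) → ℝ) (hV' : IsNNInteraction G V')
    -- (1) every pair in `Δ_{X_a}` is `V'`-good
    (hgood1 : ∀ p ∈ Delta (foldSpace X a), VGood M V' p.1 p.2)
    -- (2) `(θ^v_b(x^v), x^v)` is `V'`-good
    (hgood2 : ∀ v ∈ Vone G X a ∪ Vtwo G X a, VGood M V' (theta (xv v) v b) (xv v))
    -- (3) `(θ^w_c(x^v), x^v)` is `V'`-good
    (hgood3 : ∀ v ∈ Vone G X a ∪ Vtwo G X a, ∀ w : V, G.Adj v w → ∀ c : A, c ≠ a →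
      edgeB X v w a c → VGood M V' (theta (xv v) w c) (xv v))
    -- (4) `(θ^w_a(x^v), x^v)` is `V'`-good
    (hgood4 : ∀ v ∈ Vone G X a ∩ P₁, ∀ w : V, G.Adj v w → edgeB X v w a a →
      VGood M V' (theta (xv v) w a) (xv v)) :
    (∀ x y : V → A, (x, y) ∈ Delta X → M x y = gibbsSum V' x y) ∧
      M ∈ gibbsSet G X := by
  set N : (V → A) → (V → A) → ℝ := fun x y => M x y - restrictCocycle X (gibbsSum V') x y
  have hN : IsMarkovCocycle G X N := hM.sub (isMarkovCocycle_restrictCocycle_gibbsSum hlf hV')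
  have hN₀ : VanishesOnSpecialPairs G P₁ X a b xv N :=
    ⟨fun p hp => sub_restrictCocycle_gibbsSum_eq_zero hM.1 (hgood1 p hp),
      fun v hv => sub_restrictCocycle_gibbsSum_eq_zero hM.1 (hgood2 v hv),
      fun v hv w hvw c hc hvw' => sub_restrictCocycle_gibbsSum_eq_zero hM.1
        (hgood3 v hv w hvw c hc hvw'),
      fun v hv w hvw hvw' => sub_restrictCocycle_gibbsSum_eq_zero hM.1 (hgood4 v hv w hvw hvw')⟩
  have S : FoldSetting G P₁ P₂ X a b xv := ⟨hlf, hbip, hX, hfold, hxvX, hxv1, hxv2, hxvfold⟩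
  have hgibbs : ∀ x y, (x, y) ∈ Delta X → M x y = gibbsSum V' x y := fun x y hxy => by
    have h := S.apply_eq_zero hN hN₀ hxy
    simp only [N, restrictCocycle, if_pos hxy] at h
    linarith
  exact ⟨hgibbs, hM.1, V', hV', hgibbs⟩

/-- If `V'` is a nearest neighbour interaction making the pairs
(1)-(4) `V'`-good, then the Markov cocycle `M` is the Gibbs cocycle of `V'`;
in particular `M ∈ 𝐆_X`. -/
theorem statement15 [Countable V] [Fintype A]
    (G : SimpleGraph V) (hlf : ∀ v : V, (G.neighborSet v).Finite)
    (P₁ P₂ : Set V) (hbip : IsBipartition G P₁ P₂)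
    (X : Set (V → A)) (hX : IsNNConstraint G X)
    (a b : A) (hfold : FoldsInto G X a b)
    (xv : V → V → A)
    (hxvX : ∀ v ∈ Vone G X a ∪ Vtwo G X a, xv v ∈ X)
    (hxv1 : ∀ v ∈ Vone G X a,
      xv v v = a ∧ ∀ u ∈ ballSet G v 2, u ≠ v → xv v u = b)
    (hxv2 : ∀ v ∈ Vtwo G X a,
      xv v v = a ∧ ∀ u ∈ boundary G (ballSet G v 1), xv v u = b)
    (hxvfold : ∀ v ∈ Vone G X a ∪ Vtwo G X a, theta (xv v) v b ∈ foldSpace X a)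
    (hxvmulti : ∀ v ∈ Vone G X a ∪ Vtwo G X a,
      ∀ (r : ℕ) (w : Fin r → V) (c : Fin r → A), Function.Injective w →
        (∀ i, G.Adj v (w i)) → (∀ i, edgeB X v (w i) a (c i)) →
        multiUpdate (xv v) w c ∈ X)
    (M : (V → A) → (V → A) → ℝ) (hM : IsMarkovCocycle G X M)
    (U : ∀ F : Set V, (F → A) → ℝ) (hU : IsNNInteraction G U)
    (hMU : ∀ x y : V → A, (x, y) ∈ Delta (foldSpace X a) → M x y = gibbsSum U x y)
    (V' : ∀ F : Set V, (F → A) → ℝ) (hV' : IsNNInteraction G V')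
    -- (1) every pair in `Δ_{X_a}` is `V'`-good
    (hgood1 : ∀ p ∈ Delta (foldSpace X a), VGood M V' p.1 p.2)
    -- (2) `(θ^v_b(x^v), x^v)` is `V'`-good
    (hgood2 : ∀ v ∈ Vone G X a ∪ Vtwo G X a, VGood M V' (theta (xv v) v b) (xv v))
    -- (3) `(θ^w_c(x^v), x^v)` is `V'`-good
    (hgood3 : ∀ v ∈ Vone G X a ∪ Vtwo G X a, ∀ w : V, G.Adj v w → ∀ c : A, c ≠ a →
      edgeB X v w a c → VGood M V' (theta (xv v) w c) (xv v))
    -- (4) `(θ^w_a(x^v), x^v)` is `V'`-good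
    (hgood4 : ∀ v ∈ Vone G X a ∩ P₁, ∀ w : V, G.Adj v w → edgeB X v w a a →
      VGood M V' (theta (xv v) w a) (xv v)) :
    (∀ x y : V → A, (x, y) ∈ Delta X → M x y = gibbsSum V' x y) ∧
      M ∈ gibbsSet G X :=
  statement15_general G hlf P₁ P₂ hbip X hX a b hfold xv hxvX hxv1 hxv2 hxvfold M hM V' hV' hgood1
    hgood2 hgood3 hgood4
end HC
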